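/- Let r ≥ 3 and let G be a C_{1r}-free linear r-graph with an edge e = {u_1,...,u_r} satisfying d(u_1) = d(u_2) = (r-1)^2 + 1 and d(u_i) ≥ (r-1)^2 for 3 ≤ i ≤ r. Then the set of vertices outside e lying on a common edge with u_1 equals the set of vertices outside e lying on a common edge with u_2, i.e., G(u_1) = G(u_2). -/

import Mathlib

open Finset

/-- A linear `r`-uniform hypergraph: every edge has `r` vertices and
any two distinct edges intersect in at most one vertex. -/
def IsLinear {V : Type*} [DecidableEq V] (r : ℕ) (E : Finset (Finset V)) : Prop :=
  (∀ e ∈ E, e.card = r) ∧ ∀ e ∈ E, ∀ f ∈ E, e ≠ f → (e ∩ f).card ≤ 1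

/-- The degree of a vertex: the number of edges containing it. -/
def degree {V : Type*} [DecidableEq V] (E : Finset (Finset V)) (v : V) : ℕ :=
  (E.filter (fun e => v ∈ e)).card

/-- `E` contains a copy of the `r`-crown `C_{1r}`: `r` pairwise disjoint edges
together with one edge meeting each of them in exactly one vertex. -/
def HasCrown {V : Type*} [DecidableEq V] (r : ℕ) (E : Finset (Finset V)) : Prop :=
  ∃ e ∈ E, ∃ f : Fin r → Finset V,
    (∀ i, f i ∈ E) ∧ (∀ i, f i ≠ e) ∧
    (∀ i j, i ≠ j → f i ∩ f j = ∅) ∧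
    (∀ i, (e ∩ f i).card = 1)

/-- `E` contains a copy of `C*`: `r-2` edges pairwise meeting exactly in a common
vertex `v`, two further edges disjoint from each other and from all the others,
and one edge meeting each of the `r` edges in exactly one vertex, avoiding `v`. -/
def HasCStar {V : Type*} [DecidableEq V] (r : ℕ) (E : Finset (Finset V)) : Prop :=
  ∃ v : V, ∃ e ∈ E, ∃ f : Fin r → Finset V,
    (∀ i, f i ∈ E) ∧ (∀ i, f i ≠ e) ∧
    (∀ i : Fin r, (i : ℕ) < r - 2 → v ∈ f i) ∧
    (∀ i j : Fin r, (i : ℕ) < r - 2 → (j : ℕ) < r - 2 → i ≠ j → f i ∩ f j = {v}) ∧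
    (∀ i j : Fin r, r - 2 ≤ (i : ℕ) → i ≠ j → f i ∩ f j = ∅) ∧
    (∀ i, (e ∩ f i).card = 1) ∧ v ∉ e

namespace IsLinear

variable {V : Type*} [DecidableEq V] {r : ℕ} {E : Finset (Finset V)}

theorem eq_of_mem_of_mem (hlin : IsLinear r E) {f f' : Finset V} (hf : f ∈ E) (hf' : f' ∈ E)
    {x y : V} (hxy : x ≠ y) (hx : x ∈ f) (hy : y ∈ f) (hx' : x ∈ f') (hy' : y ∈ f') :
    f = f' := by
  by_contra hne
  have : 1 < #(f ∩ f') := one_lt_card.2 ⟨x, mem_inter.2 ⟨hx, hx'⟩, y, mem_inter.2 ⟨hy, hy'⟩, hxy⟩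
  have := hlin.2 f hf f' hf' hne
  omega

theorem inter_eq_singleton (hlin : IsLinear r E) {e f : Finset V} (he : e ∈ E) (hf : f ∈ E)
    (hfe : f ≠ e) {p : V} (hpe : p ∈ e) (hpf : p ∈ f) : e ∩ f = {p} :=
  eq_singleton_iff_unique_mem.2 ⟨mem_inter.2 ⟨hpe, hpf⟩, fun x hx => by
    by_contra hxp
    exact hfe (hlin.eq_of_mem_of_mem hf he hxp (mem_inter.1 hx).2 hpf (mem_inter.1 hx).1 hpe)⟩

theorem card_sdiff_le (hlin : IsLinear r E) {e f : Finset V} (hf : f ∈ E) {p : V}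
    (hpe : p ∈ e) (hpf : p ∈ f) : #(f \ e) ≤ r - 1 := by
  have hsub : f \ e ⊆ f.erase p := fun x hx =>
    mem_erase.2 ⟨fun h => (mem_sdiff.1 hx).2 (h ▸ hpe), (mem_sdiff.1 hx).1⟩
  calc #(f \ e) ≤ #(f.erase p) := card_le_card hsub
    _ = r - 1 := by rw [card_erase_of_mem hpf, hlin.1 f hf]

/-- Each vertex of `S` lies on at most one edge through `p`. -/
theorem card_filter_not_disjoint_le (hlin : IsLinear r E) {p : V} {S : Finset V} (hpS : p ∉ S) :
    #{f ∈ E | p ∈ f ∧ ¬Disjoint f S} ≤ #S := by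
  refine card_le_card_of_forall_subsingleton (fun f x => x ∈ f) (fun f hf => ?_) ?_
  · obtain ⟨x, hxf, hxS⟩ := not_disjoint_iff.1 (mem_filter.1 hf).2.2
    exact ⟨x, hxS, hxf⟩
  · rintro x hxS f ⟨hf, hxf⟩ f' ⟨hf', hxf'⟩
    have hxp : x ≠ p := fun h => hpS (h ▸ hxS)
    rw [mem_filter] at hf hf'
    exact hlin.eq_of_mem_of_mem hf.1 hf'.1 hxp hxf hf.2.1 hxf' hf'.2.1

theorem exists_edge_disjoint (hlin : IsLinear r E) (e : Finset V) {p : V} {S : Finset V}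
    (hpS : p ∉ S) (hdeg : #S + 1 < degree E p) :
    ∃ f ∈ E, f ≠ e ∧ p ∈ f ∧ Disjoint f S := by
  by_contra! h
  have hsub : {f ∈ E | p ∈ f} ⊆ insert e {f ∈ E | p ∈ f ∧ ¬Disjoint f S} := by
    intro f hf
    obtain ⟨hfE, hpf⟩ := mem_filter.1 hf
    by_cases hfe : f = e
    · exact hfe ▸ mem_insert_self _ _
    · exact mem_insert_of_mem (mem_filter.2 ⟨hfE, hpf, h f hfE hfe hpf⟩)
  have := (card_le_card hsub).trans (card_insert_le _ _)
  have := hlin.card_filter_not_disjoint_le hpS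
  unfold degree at hdeg
  omega

end IsLinear

section PartialCrown

variable {V ι : Type*} [DecidableEq V] {r : ℕ} {E : Finset (Finset V)} {e : Finset V}
  {u : ι → V} {I : Finset ι} {g : ι → Finset V}

/-- The legs over `I` of a crown whose transversal edge is `e`, the leg `g i` meeting `e`
at `u i`. -/
def IsPartialCrown (E : Finset (Finset V)) (e : Finset V) (u : ι → V) (I : Finset ι)
    (g : ι → Finset V) : Prop :=
  (∀ i ∈ I, g i ∈ E ∧ g i ≠ e ∧ u i ∈ g i) ∧ (I : Set ι).PairwiseDisjoint g

namespace IsPartialCrown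

theorem card_biUnion_sdiff_le (hlin : IsLinear r E) (hmem : ∀ i, u i ∈ e)
    (hc : IsPartialCrown E e u I g) : #(I.biUnion (g · \ e)) ≤ #I * (r - 1) :=
  card_biUnion_le_card_mul _ _ _ fun i hi =>
    hlin.card_sdiff_le (hc.1 i hi).1 (hmem i) (hc.1 i hi).2.2

theorem insert [DecidableEq ι] (hlin : IsLinear r E) (he : e ∈ E)
    (hinj : Function.Injective u) (hmem : ∀ i, u i ∈ e) (hc : IsPartialCrown E e u I g)
    {j : ι} (hj : j ∉ I) {f : Finset V} (hf : f ∈ E) (hfe : f ≠ e) (hjf : u j ∈ f)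
    (hdisj : Disjoint f (I.biUnion (g · \ e))) :
    IsPartialCrown E e u (insert j I) (Function.update g j f) := by
  have hfg : ∀ i ∈ I, Disjoint f (g i) := by
    intro i hi
    obtain ⟨hgi, hgie, hig⟩ := hc.1 i hi
    refine disjoint_left.2 fun x hxf hxg => ?_
    by_cases hxe : x ∈ e
    · have hxj : x = u j := by
        simpa [hlin.inter_eq_singleton he hf hfe (hmem j) hjf] using mem_inter.2 ⟨hxe, hxf⟩
      have hxi : x = u i := by
        simpa [hlin.inter_eq_singleton he hgi hgie (hmem i) hig] using mem_inter.2 ⟨hxe, hxg⟩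
      exact hj (hinj (hxi.symm.trans hxj) ▸ hi)
    · exact disjoint_left.1 hdisj hxf (mem_biUnion.2 ⟨i, hi, mem_sdiff.2 ⟨hxg, hxe⟩⟩)
  have hupd : ∀ i ∈ I, Function.update g j f i = g i := fun i hi =>
    Function.update_of_ne (ne_of_mem_of_not_mem hi hj) _ _
  refine ⟨fun i hi => ?_, ?_⟩
  · rcases mem_insert.1 hi with rfl | hi
    · simpa using ⟨hf, hfe, hjf⟩
    · rw [hupd i hi]
      exact hc.1 i hi
  · rw [coe_insert, Set.pairwiseDisjoint_insert]
    refine ⟨fun i hi k hk hik => ?_, fun i hi _ => ?_⟩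
    · rw [Function.onFun, hupd i hi, hupd k hk]
      exact hc.2 hi hk hik
    · rw [Function.update_self, hupd i hi]
      exact hfg i hi

theorem exists_union [DecidableEq ι] (hlin : IsLinear r E) (he : e ∈ E)
    (hinj : Function.Injective u) (hmem : ∀ i, u i ∈ e) (hc : IsPartialCrown E e u I g)
    {J : Finset ι} (hIJ : Disjoint I J)
    (hdeg : ∀ j ∈ J, (#I + #J - 1) * (r - 1) + 1 < degree E (u j)) :
    ∃ g', IsPartialCrown E e u (I ∪ J) g' ∧ ∀ i ∈ I, g' i = g i := by
  induction J using Finset.induction_on with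
  | empty => exact ⟨g, by simpa using hc, fun _ _ => rfl⟩
  | insert j J hjJ ih =>
    obtain ⟨hjI, hIJ⟩ := disjoint_insert_right.1 hIJ
    obtain ⟨g', hc', hg'⟩ := ih hIJ fun k hk =>
      (hdeg k (mem_insert_of_mem hk)).trans_le' (by gcongr; exact subset_insert j J)
    have hjIJ : j ∉ I ∪ J := by simp [hjI, hjJ]
    have hcard := hc'.card_biUnion_sdiff_le hlin hmem
    have hdegj := hdeg j (mem_insert_self _ _)
    rw [card_union_of_disjoint hIJ] at hcard
    rw [card_insert_of_notMem hjJ, ← add_assoc, Nat.add_sub_cancel] at hdegj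
    have hujS : u j ∉ (I ∪ J).biUnion (g' · \ e) := by simp [hmem j]
    obtain ⟨f, hf, hfe, hjf, hdisj⟩ := hlin.exists_edge_disjoint e hujS (by omega)
    refine ⟨Function.update g' j f, ?_, fun i hi => ?_⟩
    · rw [union_insert]
      exact hc'.insert hlin he hinj hmem hjIJ hf hfe hjf hdisj
    · rw [Function.update_of_ne (ne_of_mem_of_not_mem hi hjI), hg' i hi]

theorem hasCrown (hlin : IsLinear r E) (he : e ∈ E) {u : Fin r → V} (hmem : ∀ i, u i ∈ e)
    {g : Fin r → Finset V} (hc : IsPartialCrown E e u univ g) : HasCrown r E := by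
  refine ⟨e, he, g, fun i => (hc.1 i (mem_univ i)).1, fun i => (hc.1 i (mem_univ i)).2.1,
    fun i j hij => disjoint_iff_inter_eq_empty.1 (hc.2 (mem_univ i) (mem_univ j) hij),
    fun i => ?_⟩
  obtain ⟨hgi, hgie, hig⟩ := hc.1 i (mem_univ i)
  rw [hlin.inter_eq_singleton he hgi hgie (hmem i) hig, card_singleton]

end IsPartialCrown

end PartialCrown

section Neighborhood

variable {V : Type*} [DecidableEq V] {r : ℕ} {E : Finset (Finset V)} {e : Finset V}

/-- `G(p)` relative to the edge `e`. -/
def nbhdOutside (E : Finset (Finset V)) (e : Finset V) (p : V) : Set V :=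
  {w | w ∉ e ∧ ∃ f ∈ E, p ∈ f ∧ w ∈ f}

/-- If `w ∈ G(u a) \ G(u b)`, legs at `u a` through `w` and then greedily at the other
`u i` (`i ≠ b`) use at most `(r - 1)^2` vertices outside `e`, one of them `w`; since no
edge through `u b` contains `w`, `d(u b) > (r - 1)^2` leaves room for a last leg at
`u b`, completing a crown. -/
theorem nbhdOutside_subset (hlin : IsLinear r E) (hfree : ¬HasCrown r E) (he : e ∈ E)
    {u : Fin r → V} (hinj : Function.Injective u) (hmem : ∀ i, u i ∈ e) {a b : Fin r}
    (hab : a ≠ b) (hb : (r - 1) ^ 2 + 1 ≤ degree E (u b))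
    (hdeg : ∀ i, i ≠ a → i ≠ b → (r - 1) ^ 2 ≤ degree E (u i)) :
    nbhdOutside E e (u a) ⊆ nbhdOutside E e (u b) := by
  rintro w ⟨hwe, f₁, hf₁, haf₁, hwf₁⟩
  refine ⟨hwe, ?_⟩
  by_contra! hwb
  apply hfree
  have hf₁e : f₁ ≠ e := by
    rintro rfl
    exact hwe hwf₁
  have hc₁ : IsPartialCrown E e u {a} fun _ => f₁ :=
    ⟨by simpa using ⟨hf₁, hf₁e, haf₁⟩, by simp⟩
  set J := (univ.erase a).erase b
  have hJ : #J = r - 2 := by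
    rw [card_erase_of_mem (by simpa using hab.symm), card_erase_of_mem (mem_univ a),
      card_univ, Fintype.card_fin, Nat.sub_sub]
  obtain ⟨g, hc, hga⟩ := hc₁.exists_union hlin he hinj hmem (J := J) (by simp [J])
    fun j hj => by
      have hr : 1 ≤ r - 2 := hJ ▸ card_pos.2 ⟨j, hj⟩
      obtain ⟨hjb, hja⟩ : j ≠ b ∧ j ≠ a := by simpa [J] using hj
      calc (#{a} + #J - 1) * (r - 1) + 1 = (r - 2) * (r - 1) + 1 := by
            rw [hJ, card_singleton, Nat.add_sub_cancel_left]
        _ < (r - 2 + 1) * (r - 1) := by rw [Nat.succ_mul]; omega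
        _ = (r - 1) ^ 2 := by rw [sq]; congr 1; omega
        _ ≤ degree E (u j) := hdeg j hja hjb
  have hIJ : {a} ∪ J = univ.erase b := by
    ext i
    by_cases hia : i = a <;> simp [J, hia, hab]
  rw [hIJ] at hc
  set S := (univ.erase b).biUnion (g · \ e)
  have hwS : w ∈ S :=
    mem_biUnion.2 ⟨a, mem_erase.2 ⟨hab, mem_univ a⟩, by simp [hga a (mem_singleton_self a), *]⟩
  have hS : #S ≤ (r - 1) ^ 2 := by
    have := hc.card_biUnion_sdiff_le hlin hmem
    rwa [card_erase_of_mem (mem_univ b), card_univ, Fintype.card_fin, ← sq] at this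
  have hbS : u b ∉ S.erase w := fun h => by simpa [S, hmem b] using mem_of_mem_erase h
  obtain ⟨f₂, hf₂, hf₂e, hbf₂, hf₂S⟩ := hlin.exists_edge_disjoint e hbS
    (by rw [card_erase_add_one hwS]; omega)
  have hdisj : Disjoint f₂ S := by
    have := disjoint_erase_comm.2 hf₂S
    rwa [erase_eq_of_notMem (hwb f₂ hf₂ hbf₂)] at this
  have hcrown := hc.insert hlin he hinj hmem (notMem_erase b univ) hf₂ hf₂e hbf₂ hdisj
  rw [insert_erase (mem_univ b)] at hcrown
  exact hcrown.hasCrown hlin he hmem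

end Neighborhood

/-- For an edge `e = {u_1,…,u_r}` with `d(u_1) = d(u_2) = (r-1)^2 + 1` and
`d(u_i) ≥ (r-1)^2` for `i ≥ 3` in a `C_{1r}`-free linear `r`-graph,
`G(u_1) = G(u_2)`, where `G(p)` is the set of vertices outside `e`
lying on a common edge with `p`. -/
theorem neighborhood_eq {V : Type*} [DecidableEq V]
    (r : ℕ) (hr : 3 ≤ r) (E : Finset (Finset V)) (hlin : IsLinear r E)
    (hfree : ¬ HasCrown r E)
    (e : Finset V) (he : e ∈ E) (u : Fin r → V)
    (hinj : Function.Injective u) (hmem : ∀ i, u i ∈ e)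
    (hd1 : degree E (u ⟨0, by omega⟩) = (r - 1) ^ 2 + 1)
    (hd2 : degree E (u ⟨1, by omega⟩) = (r - 1) ^ 2 + 1)
    (hdi : ∀ i : Fin r, 2 ≤ (i : ℕ) → (r - 1) ^ 2 ≤ degree E (u i)) :
    {w : V | w ∉ e ∧ ∃ f ∈ E, u ⟨0, by omega⟩ ∈ f ∧ w ∈ f} =
      {w : V | w ∉ e ∧ ∃ f ∈ E, u ⟨1, by omega⟩ ∈ f ∧ w ∈ f} := by
  have h01 : (⟨0, by omega⟩ : Fin r) ≠ ⟨1, by omega⟩ := by simp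
  have hdeg : ∀ i : Fin r, i ≠ ⟨0, by omega⟩ → i ≠ ⟨1, by omega⟩ → (r - 1) ^ 2 ≤ degree E (u i) :=
    fun i h0 h1 => hdi i (by simp only [ne_eq, Fin.ext_iff] at h0 h1; omega)
  exact (nbhdOutside_subset hlin hfree he hinj hmem h01 hd2.ge hdeg).antisymm
    (nbhdOutside_subset hlin hfree he hinj hmem h01.symm hd1.ge fun i h1 h0 => hdeg i h0 h1)
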